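/- Let d be odd and X₁,…,X_d nonpositive random variables with X_i ~ F_i. Then the infimum of E(X₁⋯X_d) over all couplings is attained by the comonotonic coupling X_i = F_i⁻¹(U), U ~ Uniform[0,1], and equals −E(∏_{i=1}^d G_i⁻¹(U)) where G_i is the distribution function of |X_i|. -/

import Mathlib

/-!
Since `d` is odd and the `X_i` are nonpositive, `∏ X_i = -∏ |X_i|`, so minimizing `E ∏ X_i` means
maximizing `E ∏ |X_i|`. Writing `∏ ofReal |X_i|` as the product measure of a box, Tonelli gives
`E ∏ |X_i| = ∫ P(|X_i| > t_i for all i) dt`, and the integrand is at most `min_i P(|X_i| > t_i)`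
(the Fréchet bound), which is attained by the comonotonic vector `(G_i⁻¹(U))_i`. Finally
`G_i⁻¹(1 - u) = -F_i⁻¹(u)` except at the countably many levels `u` where `F_i` is flat, and
`u ↦ 1 - u` preserves Lebesgue measure on `[0, 1]`.
-/

open MeasureTheory Set

/-- Generalized inverse (quantile function). -/
noncomputable def quantile (ν : Measure ℝ) (u : ℝ) : ℝ :=
  sInf {x : ℝ | u ≤ (ν (Iic x)).toReal}

open ProbabilityTheory Filter Topology

section Quantile

variable {ν : Measure ℝ} {u x : ℝ}

lemma bddBelow_setOf_le_cdf (hu : 0 < u) : BddBelow {x | u ≤ cdf ν x} := by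
  obtain ⟨a, ha⟩ := ((tendsto_cdf_atBot ν).eventually (gt_mem_nhds hu)).exists
  exact ⟨a, fun x hx => le_of_not_gt fun hxa => (hx.trans (monotone_cdf ν hxa.le)).not_gt ha⟩

lemma nonempty_setOf_le_cdf (hu : u < 1) : {x | u ≤ cdf ν x}.Nonempty :=
  ((tendsto_cdf_atTop ν).eventually (lt_mem_nhds hu)).exists.imp fun _ => le_of_lt

variable [IsProbabilityMeasure ν]

lemma quantile_eq_sInf_cdf : quantile ν u = sInf {x | u ≤ cdf ν x} := by
  simp only [quantile, cdf_eq_real, measureReal_def]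

lemma le_cdf_quantile (hu : 0 < u) (hu1 : u < 1) : u ≤ cdf ν (quantile ν u) := by
  rw [quantile_eq_sInf_cdf]
  refine ge_of_tendsto (((cdf ν).right_continuous _).mono Ioi_subset_Ici_self).tendsto
    (eventually_nhdsWithin_of_forall fun y hy => ?_)
  obtain ⟨s, hs, hsy⟩ := (csInf_lt_iff (bddBelow_setOf_le_cdf hu) (nonempty_setOf_le_cdf hu1)).1 hy
  exact hs.trans (monotone_cdf ν hsy.le)

lemma quantile_le_iff (hu : 0 < u) (hu1 : u < 1) : quantile ν u ≤ x ↔ u ≤ cdf ν x :=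
  ⟨fun h => (le_cdf_quantile hu hu1).trans (monotone_cdf ν h), fun h => by
    rw [quantile_eq_sInf_cdf]; exact csInf_le (bddBelow_setOf_le_cdf hu) h⟩

lemma lt_quantile_iff (hu : 0 < u) (hu1 : u < 1) : x < quantile ν u ↔ cdf ν x < u := by
  simpa only [not_le] using (quantile_le_iff hu hu1).not

lemma quantile_monotoneOn : MonotoneOn (quantile ν) (Ioo 0 1) :=
  fun _ hu _ hv huv => (quantile_le_iff hu.1 hu.2).2 (huv.trans (le_cdf_quantile hv.1 hv.2))

lemma quantile_nonpos (hν : ν (Iic 0) = 1) (hu : 0 < u) (hu1 : u < 1) : quantile ν u ≤ 0 := by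
  rw [quantile_le_iff hu hu1, cdf_eq_real, measureReal_def, hν, ENNReal.toReal_one]
  exact hu1.le

lemma quantile_nonneg (hν : ν (Iio 0) = 0) (hu : 0 < u) (hu1 : u < 1) : 0 ≤ quantile ν u := by
  refine le_of_not_gt fun h => (le_cdf_quantile (ν := ν) hu hu1).not_gt ?_
  calc cdf ν (quantile ν u) = ν.real (Iic (quantile ν u)) := cdf_eq_real ν _
    _ ≤ ν.real (Iio 0) := measureReal_mono (Iic_subset_Iio.2 h)
    _ < u := by rwa [measureReal_def, hν, ENNReal.toReal_zero]

end Quantile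

lemma aemeasurable_quantile (ν : Measure ℝ) [IsProbabilityMeasure ν] :
    AEMeasurable (quantile ν) (volume.restrict (Icc 0 1)) := by
  rw [← Measure.restrict_congr_set Ioo_ae_eq_Icc]
  exact aemeasurable_restrict_of_monotoneOn measurableSet_Ioo quantile_monotoneOn

section MapAbs

variable {ν : Measure ℝ} {u t : ℝ}

lemma map_abs_Iio_zero : ν.map (fun x => |x|) (Iio 0) = 0 := by
  have : (fun x : ℝ => |x|) ⁻¹' Iio 0 = ∅ := by
    ext y; simp
  rw [Measure.map_apply measurable_abs measurableSet_Iio, this, measure_empty]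

variable [IsProbabilityMeasure ν]

instance isProbabilityMeasure_map_abs : IsProbabilityMeasure (ν.map fun x => |x|) :=
  Measure.isProbabilityMeasure_map measurable_abs.aemeasurable

lemma cdf_map_abs (hν : ν (Iic 0) = 1) (ht : 0 ≤ t) :
    cdf (ν.map (fun x => |x|)) t = 1 - ν.real (Iio (-t)) := by
  have hIic : ν (Iic t) = 1 := prob_le_one.antisymm (hν ▸ measure_mono (Iic_subset_Iic.2 ht))
  have hpre : (fun x : ℝ => |x|) ⁻¹' Iic t = Iic t \ Iio (-t) := by
    ext y; simp [abs_le, and_comm]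
  rw [cdf_eq_real, measureReal_def, Measure.map_apply measurable_abs measurableSet_Iic, hpre,
    ← measureReal_def, measureReal_sdiff (Iio_subset_Iic_self.trans (Iic_subset_Iic.2 (by linarith)))
      measurableSet_Iio, measureReal_def, hIic, ENNReal.toReal_one]

lemma quantile_map_abs_one_sub (hν : ν (Iic 0) = 1) (hu : 0 < u) (hu1 : u < 1)
    (hgood : u ∉ range fun ρ : ℚ => cdf ν ρ) :
    quantile (ν.map (fun x => |x|)) (1 - u) = -quantile ν u := by
  have hv : 0 < 1 - u := by linarith
  have hv1 : 1 - u < 1 := by linarith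
  have hq := quantile_nonpos hν hu hu1
  apply le_antisymm
  · refine le_of_forall_pos_le_add fun ε hε => ?_
    rw [quantile_le_iff hv hv1, cdf_map_abs hν (by linarith), neg_add, neg_neg, sub_le_sub_iff_left]
    calc ν.real (Iio (quantile ν u + -ε)) ≤ cdf ν (quantile ν u + -ε) := by
          rw [cdf_eq_real]; exact measureReal_mono Iio_subset_Iic_self
      _ ≤ u := ((lt_quantile_iff hu hu1).1 (by linarith)).le
  · set x := quantile (ν.map (fun x => |x|)) (1 - u)
    have hx : 0 ≤ x := quantile_nonneg map_abs_Iio_zero hv hv1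
    have hxu : ν.real (Iio (-x)) ≤ u := by
      have := le_cdf_quantile hv hv1 (ν := ν.map (fun x => |x|))
      rw [cdf_map_abs hν hx] at this
      linarith
    by_contra! hlt
    -- `cdf ν` would equal `u` on `[quantile ν u, -x)`, in particular at a rational point
    obtain ⟨ρ, hqρ, hρx⟩ := exists_rat_btwn (show quantile ν u < -x by linarith)
    refine hgood ⟨ρ, le_antisymm ?_ ((quantile_le_iff hu hu1).1 hqρ.le)⟩
    calc cdf ν ρ = ν.real (Iic (ρ : ℝ)) := cdf_eq_real ν ρ
      _ ≤ ν.real (Iio (-x)) := measureReal_mono (Iic_subset_Iio.2 hρx)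
      _ ≤ u := hxu

end MapAbs

lemma Finset.prod_neg_of_odd_card {ι M : Type*} [CommMonoid M] [HasDistribNeg M] {s : Finset ι}
    (hs : Odd s.card) (f : ι → M) : ∏ i ∈ s, -f i = -∏ i ∈ s, f i := by
  rw [Finset.prod_neg, hs.neg_one_pow, neg_one_mul]

lemma integral_Icc_zero_one_comp_one_sub {E : Type*} [NormedAddCommGroup E] [NormedSpace ℝ E]
    (f : ℝ → E) : ∫ u in Icc (0 : ℝ) 1, f (1 - u) = ∫ u in Icc (0 : ℝ) 1, f u := by
  simp only [integral_Icc_eq_integral_Ioc, ← intervalIntegral.integral_of_le zero_le_one,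
    intervalIntegral.integral_comp_sub_left, sub_self, sub_zero]

lemma ae_restrict_Icc_zero_one_mem_Ioo : ∀ᵐ u ∂volume.restrict (Icc (0 : ℝ) 1), u ∈ Ioo 0 1 := by
  rw [← Measure.restrict_congr_set Ioo_ae_eq_Icc]
  exact ae_restrict_mem measurableSet_Ioo

lemma ae_quantile_eq_neg_quantile_map_abs_one_sub {ν : Measure ℝ} [IsProbabilityMeasure ν]
    (hν : ν (Iic 0) = 1) :
    ∀ᵐ u ∂volume.restrict (Icc (0 : ℝ) 1),
      quantile ν u = -quantile (ν.map (fun x => |x|)) (1 - u) := by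
  filter_upwards [ae_restrict_Icc_zero_one_mem_Ioo,
    ae_restrict_of_ae ((countable_range fun ρ : ℚ => cdf ν ρ).ae_notMem volume)] with u hu hgood
  rw [quantile_map_abs_one_sub hν hu.1 hu.2 hgood, neg_neg]

lemma integral_prod_quantile_eq_neg_integral_prod_quantile_map_abs {ι : Type*} [Fintype ι]
    (hι : Odd (Fintype.card ι)) (ν : ι → Measure ℝ) [∀ i, IsProbabilityMeasure (ν i)]
    (hν : ∀ i, ν i (Iic 0) = 1) :
    ∫ u in Icc (0 : ℝ) 1, ∏ i, quantile (ν i) u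
      = -∫ u in Icc (0 : ℝ) 1, ∏ i, quantile ((ν i).map (fun x => |x|)) u := by
  have hprod : ∀ᵐ u ∂volume.restrict (Icc (0 : ℝ) 1),
      ∏ i, quantile (ν i) u = -∏ i, quantile ((ν i).map (fun x => |x|)) (1 - u) := by
    filter_upwards [ae_all_iff.2 fun i => ae_quantile_eq_neg_quantile_map_abs_one_sub (hν i)]
      with u hu
    rw [Finset.prod_congr rfl fun i _ => hu i, Finset.prod_neg_of_odd_card hι]
  rw [integral_congr_ae hprod, integral_neg,
    integral_Icc_zero_one_comp_one_sub fun u => ∏ i, quantile ((ν i).map (fun x => |x|)) u]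

section LayerCake

variable {ι Ω : Type*} [Fintype ι] [MeasurableSpace Ω] {μ : Measure Ω} {Z : ι → Ω → ℝ}

lemma prod_ofReal_eq_pi_setOf_forall_lt (z : ι → ℝ) :
    ∏ i, ENNReal.ofReal (z i)
      = Measure.pi (fun _ : ι => volume.restrict (Ioi (0 : ℝ))) {t | ∀ i, t i < z i} := by
  have : {t : ι → ℝ | ∀ i, t i < z i} = univ.pi fun i => Iio (z i) := by
    ext t; simp
  simp [this, Measure.pi_pi, Measure.restrict_apply measurableSet_Iio, Iio_inter_Ioi]

lemma lintegral_prod_ofReal_eq_lintegral_measure_forall_lt [SFinite μ]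
    (hZ : ∀ i, Measurable (Z i)) :
    ∫⁻ ω, ∏ i, ENNReal.ofReal (Z i ω) ∂μ
      = ∫⁻ t, μ {ω | ∀ i, t i < Z i ω} ∂Measure.pi fun _ : ι => volume.restrict (Ioi (0 : ℝ)) := by
  have hs : MeasurableSet {p : Ω × (ι → ℝ) | ∀ i, p.2 i < Z i p.1} := by
    simp only [ofPred_forall]
    exact MeasurableSet.iInter fun i => measurableSet_lt (by fun_prop) ((hZ i).comp measurable_fst)
  simp_rw [prod_ofReal_eq_pi_setOf_forall_lt]
  exact (Measure.prod_apply hs).symm.trans (Measure.prod_apply_symm hs)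

lemma lintegral_prod_ofReal_eq_lintegral_measure_forall_lt' [SFinite μ]
    (hZ : ∀ i, AEMeasurable (Z i) μ) :
    ∫⁻ ω, ∏ i, ENNReal.ofReal (Z i ω) ∂μ
      = ∫⁻ t, μ {ω | ∀ i, t i < Z i ω} ∂Measure.pi fun _ : ι => volume.restrict (Ioi (0 : ℝ)) := by
  have hmk : ∀ᵐ ω ∂μ, ∀ i, Z i ω = (hZ i).mk _ ω := ae_all_iff.2 fun i => (hZ i).ae_eq_mk
  calc ∫⁻ ω, ∏ i, ENNReal.ofReal (Z i ω) ∂μ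
      = ∫⁻ ω, ∏ i, ENNReal.ofReal ((hZ i).mk _ ω) ∂μ := by
        refine lintegral_congr_ae ?_
        filter_upwards [hmk] with ω hω
        simp only [hω]
    _ = ∫⁻ t, μ {ω | ∀ i, t i < (hZ i).mk _ ω}
          ∂Measure.pi fun _ : ι => volume.restrict (Ioi (0 : ℝ)) :=
        lintegral_prod_ofReal_eq_lintegral_measure_forall_lt fun i => (hZ i).measurable_mk
    _ = _ := by
        refine lintegral_congr fun t => measure_congr (eventuallyEq_set.2 ?_)
        filter_upwards [hmk] with ω hω
        simp only [hω]

end LayerCake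

section Frechet

variable {ι Ω : Type*} [Fintype ι] [MeasurableSpace Ω] {μ : Measure Ω} {Z : ι → Ω → ℝ}
  {ν : ι → Measure ℝ} [∀ i, IsProbabilityMeasure (ν i)]

lemma measure_forall_lt_le_volume_forall_lt_quantile [Nonempty ι] (hZ : ∀ i, Measurable (Z i))
    (hlaw : ∀ i, μ.map (Z i) = ν i) (t : ι → ℝ) :
    μ {ω | ∀ i, t i < Z i ω} ≤ volume.restrict (Icc 0 1) {u | ∀ i, t i < quantile (ν i) u} := by
  obtain ⟨j, -, hj⟩ :=
    Finset.exists_max_image Finset.univ (fun i => cdf (ν i) (t i)) Finset.univ_nonempty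
  calc μ {ω | ∀ i, t i < Z i ω} ≤ μ (Z j ⁻¹' Ioi (t j)) := measure_mono fun ω hω => hω j
    _ = ν j (Ioi (t j)) := by rw [← hlaw j, Measure.map_apply (hZ j) measurableSet_Ioi]
    _ = volume (Ioo (cdf (ν j) (t j)) 1) := by
        rw [Real.volume_Ioo, ← compl_Iic, prob_compl_eq_one_sub measurableSet_Iic, ← ofReal_cdf,
          ENNReal.ofReal_sub _ (cdf_nonneg _ _), ENNReal.ofReal_one]
    _ ≤ volume.restrict (Icc 0 1) {u | ∀ i, t i < quantile (ν i) u} := by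
        rw [Measure.restrict_apply' measurableSet_Icc]
        refine measure_mono fun u hu => ?_
        have hu0 : 0 < u := (cdf_nonneg _ _).trans_lt hu.1
        refine ⟨fun i => ?_, hu0.le, hu.2.le⟩
        exact (lt_quantile_iff hu0 hu.2).2 ((hj i (Finset.mem_univ i)).trans_lt hu.1)

theorem lintegral_prod_ofReal_le_setLIntegral_prod_ofReal_quantile [Nonempty ι] [SFinite μ]
    (hZ : ∀ i, Measurable (Z i)) (hlaw : ∀ i, μ.map (Z i) = ν i) :
    ∫⁻ ω, ∏ i, ENNReal.ofReal (Z i ω) ∂μ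
      ≤ ∫⁻ u in Icc 0 1, ∏ i, ENNReal.ofReal (quantile (ν i) u) := by
  rw [lintegral_prod_ofReal_eq_lintegral_measure_forall_lt hZ,
    lintegral_prod_ofReal_eq_lintegral_measure_forall_lt' fun i => aemeasurable_quantile (ν i)]
  exact lintegral_mono fun t => measure_forall_lt_le_volume_forall_lt_quantile hZ hlaw t

theorem integral_prod_le_setIntegral_prod_quantile [Nonempty ι] [SFinite μ]
    (hν : ∀ i, ν i (Iio 0) = 0) (hZ : ∀ i, Measurable (Z i)) (hlaw : ∀ i, μ.map (Z i) = ν i)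
    (hint : IntegrableOn (fun u => ∏ i, quantile (ν i) u) (Icc 0 1)) :
    ∫ ω, ∏ i, Z i ω ∂μ ≤ ∫ u in Icc 0 1, ∏ i, quantile (ν i) u := by
  have hZ0 : ∀ᵐ ω ∂μ, ∀ i, 0 ≤ Z i ω := ae_all_iff.2 fun i => by
    refine ae_of_ae_map (hZ i).aemeasurable ?_
    filter_upwards [measure_eq_zero_iff_ae_notMem.1 ((hlaw i).symm ▸ hν i)] with x hx
    exact not_lt.1 hx
  have hq0 : ∀ᵐ u ∂volume.restrict (Icc (0 : ℝ) 1), ∀ i, 0 ≤ quantile (ν i) u := by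
    filter_upwards [ae_restrict_Icc_zero_one_mem_Ioo] with u hu i
    exact quantile_nonneg (hν i) hu.1 hu.2
  rw [integral_eq_lintegral_of_nonneg_ae (hZ0.mono fun ω hω => Finset.prod_nonneg fun i _ => hω i)
      (by fun_prop),
    integral_eq_lintegral_of_nonneg_ae (hq0.mono fun u hu => Finset.prod_nonneg fun i _ => hu i)
      hint.aestronglyMeasurable]
  refine ENNReal.toReal_mono hint.lintegral_lt_top.ne ?_
  calc ∫⁻ ω, ENNReal.ofReal (∏ i, Z i ω) ∂μ = ∫⁻ ω, ∏ i, ENNReal.ofReal (Z i ω) ∂μ :=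
        lintegral_congr_ae (hZ0.mono fun ω hω => ENNReal.ofReal_prod_of_nonneg fun i _ => hω i)
    _ ≤ ∫⁻ u in Icc 0 1, ∏ i, ENNReal.ofReal (quantile (ν i) u) :=
        lintegral_prod_ofReal_le_setLIntegral_prod_ofReal_quantile hZ hlaw
    _ = ∫⁻ u in Icc 0 1, ENNReal.ofReal (∏ i, quantile (ν i) u) :=
        lintegral_congr_ae (hq0.mono fun u hu => (ENNReal.ofReal_prod_of_nonneg fun i _ => hu i).symm)

end Frechet

lemma integral_prod_eq_neg_integral_prod_abs {ι Ω : Type*} [Fintype ι] [MeasurableSpace Ω]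
    {μ : Measure Ω} {Y : ι → Ω → ℝ} (hι : Odd (Fintype.card ι)) (hY : ∀ i, ∀ᵐ ω ∂μ, Y i ω ≤ 0) :
    ∫ ω, ∏ i, Y i ω ∂μ = -∫ ω, ∏ i, |Y i ω| ∂μ := by
  rw [← integral_neg]
  refine integral_congr_ae ?_
  filter_upwards [ae_all_iff.2 hY] with ω hω
  rw [← Finset.prod_neg_of_odd_card hι]
  exact Finset.prod_congr rfl fun i _ => by rw [abs_of_nonpos (hω i), neg_neg]

theorem stmt_13_general (d : ℕ) (hd : Odd d) (F : Fin d → Measure ℝ)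
    [∀ i, IsProbabilityMeasure (F i)]
    (hnonpos : ∀ i, F i (Iic (0:ℝ)) = 1)
    (hIntQ : IntegrableOn
      (fun u => ∏ i, quantile ((F i).map (fun x => |x|)) u) (Icc (0:ℝ) 1) volume) :
    (∫ u in Icc (0:ℝ) 1, ∏ i, quantile (F i) u
        = -∫ u in Icc (0:ℝ) 1, ∏ i, quantile ((F i).map (fun x => |x|)) u) ∧
    (∀ (Ω : Type*) [MeasurableSpace Ω] (μ : Measure Ω) [IsProbabilityMeasure μ]
        (Y : Fin d → Ω → ℝ), (∀ i, Measurable (Y i)) → (∀ i, μ.map (Y i) = F i) →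
        Integrable (fun ω => ∏ i, Y i ω) μ →
        ∫ u in Icc (0:ℝ) 1, ∏ i, quantile (F i) u ≤ ∫ ω, ∏ i, Y i ω ∂μ) := by
  have hcard : Odd (Fintype.card (Fin d)) := by rwa [Fintype.card_fin]
  have hquantile_abs :=
    integral_prod_quantile_eq_neg_integral_prod_quantile_map_abs hcard F hnonpos
  refine ⟨hquantile_abs, fun Ω _ μ _ Y hY hlaw _ => ?_⟩
  have : Nonempty (Fin d) := ⟨⟨0, hd.pos⟩⟩
  have hYnonpos : ∀ i, ∀ᵐ ω ∂μ, Y i ω ≤ 0 := fun i =>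
    ae_of_ae_map (hY i).aemeasurable
      (mem_ae_iff.2 ((hlaw i).symm ▸ (prob_compl_eq_zero_iff measurableSet_Iic).2 (hnonpos i)))
  have hlaw_abs : ∀ i, μ.map (fun ω => |Y i ω|) = (F i).map (fun x => |x|) := fun i => by
    rw [← hlaw i, Measure.map_map measurable_abs (hY i)]
    rfl
  rw [hquantile_abs, integral_prod_eq_neg_integral_prod_abs hcard hYnonpos, neg_le_neg_iff]
  exact integral_prod_le_setIntegral_prod_quantile (fun i => map_abs_Iio_zero)
    (fun i => (hY i).abs) hlaw_abs hIntQ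

/-- For `d` odd and nonpositive marginals, the comonotonic coupling `X_i = F_i⁻¹(U)`
attains the infimum of the expected product, which equals `−E(∏ G_i⁻¹(U))` where `G_i`
is the distribution function of `|X_i|`. -/
theorem stmt_13 (d : ℕ) (hd : Odd d) (F : Fin d → Measure ℝ)
    [∀ i, IsProbabilityMeasure (F i)]
    (hnonpos : ∀ i, F i (Iic (0:ℝ)) = 1)
    (hIntC : IntegrableOn (fun u => ∏ i, quantile (F i) u) (Icc (0:ℝ) 1) volume)
    (hIntQ : IntegrableOn
      (fun u => ∏ i, quantile ((F i).map (fun x => |x|)) u) (Icc (0:ℝ) 1) volume) :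
    (∫ u in Icc (0:ℝ) 1, ∏ i, quantile (F i) u
        = -∫ u in Icc (0:ℝ) 1, ∏ i, quantile ((F i).map (fun x => |x|)) u) ∧
    (∀ (Ω : Type*) [MeasurableSpace Ω] (μ : Measure Ω) [IsProbabilityMeasure μ]
        (Y : Fin d → Ω → ℝ), (∀ i, Measurable (Y i)) → (∀ i, μ.map (Y i) = F i) →
        Integrable (fun ω => ∏ i, Y i ω) μ →
        ∫ u in Icc (0:ℝ) 1, ∏ i, quantile (F i) u ≤ ∫ ω, ∏ i, Y i ω ∂μ) :=
  stmt_13_general d hd F hnonpos hIntQ
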